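/- arXiv:2111.03290 — 3 statements merged into one kernel-verified Lean document; each statement's English description precedes it below -/
import Mathlib

section
/- For any ε > 0 and σ > 0, ∑_{q=1}^∞ 1/(exp((q + 1/2)ε²/(4σ²)) - 1) ≤ C · (σ²/ε²) · (1 + ln(1 + σ²/ε²)) for some absolute constant C. -/
open Real

lemma aux_exp_bound {z : ℝ} (hz : 0 < z) :
    1 / (Real.exp z - 1) ≤ Real.exp (-z) * (1 + 1/z) := by
  have h1 : z + 1 ≤ Real.exp z := Real.add_one_le_exp z
  have hE : 0 < Real.exp z - 1 := by linarith
  have hme : Real.exp (-z) * Real.exp z = 1 := by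
    rw [← Real.exp_add]; simp
  have hpos : 0 < Real.exp (-z) := Real.exp_pos _
  rw [div_le_iff₀ hE]
  have hzne : z ≠ 0 := hz.ne'
  have key : Real.exp (-z) * (1 + z) ≤ 1 := by nlinarith
  have expand : Real.exp (-z) * (1 + 1/z) * (Real.exp z - 1)
      = (1 + 1/z) - Real.exp (-z) * (1 + 1/z) := by
    field_simp
    ring_nf
    nlinarith [hme]
  rw [expand]
  have h2 : Real.exp (-z) * (1 + 1/z) ≤ 1/z := by
    have hstep := mul_le_mul_of_nonneg_right key (le_of_lt (one_div_pos.mpr hz))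
    calc Real.exp (-z) * (1 + 1/z) = Real.exp (-z) * (1 + z) * (1/z) := by
          field_simp; ring
      _ ≤ 1 * (1/z) := hstep
      _ = 1/z := one_mul _
  linarith

lemma aux_term_le {c : ℝ} (hc : 0 < c) (n : ℕ) (hn : 1 ≤ n) :
    1 / (Real.exp (((n:ℝ) + 1/2) * c) - 1) ≤
      Real.exp (-c) ^ n + Real.exp (-c) ^ n / (n:ℝ) / c := by
  have hn' : (1:ℝ) ≤ (n:ℝ) := by exact_mod_cast hn
  have hz0 : 0 < ((n:ℝ) + 1/2) * c := by positivity
  have hnc : 0 < (n:ℝ) * c := by positivity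
  have step1 := aux_exp_bound hz0
  have step2 : Real.exp (-(((n:ℝ) + 1/2) * c)) ≤ Real.exp (-c) ^ n := by
    rw [← Real.exp_nat_mul]
    apply Real.exp_le_exp.mpr
    nlinarith
  have step3 : 1 + 1/(((n:ℝ) + 1/2) * c) ≤ 1 + 1/((n:ℝ) * c) := by
    have := one_div_le_one_div_of_le hnc (by nlinarith : (n:ℝ) * c ≤ ((n:ℝ) + 1/2) * c)
    linarith
  have step4 : Real.exp (-(((n:ℝ) + 1/2) * c)) * (1 + 1/(((n:ℝ) + 1/2) * c))
      ≤ Real.exp (-c) ^ n * (1 + 1/((n:ℝ) * c)) := by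
    apply mul_le_mul step2 step3 (by positivity) (by positivity)
  have heq : Real.exp (-c) ^ n * (1 + 1/((n:ℝ) * c))
      = Real.exp (-c) ^ n + Real.exp (-c) ^ n / (n:ℝ) / c := by
    have hn0 : (n:ℝ) ≠ 0 := by positivity
    field_simp
  linarith [heq ▸ step4, step1]

theorem stmt_4 : ∃ C : ℝ, 0 < C ∧ ∀ (ε σ : ℝ), 0 < ε → 0 < σ →
    (∑' q : ℕ+, 1 / (Real.exp ((q + 1/2) * ε^2 / (4 * σ^2)) - 1)) ≤
      C * (σ^2 / ε^2) * (1 + Real.log (1 + σ^2 / ε^2)) := by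
  refine ⟨16, by norm_num, fun ε σ hε hσ => ?_⟩
  set s : ℝ := σ^2 / ε^2 with hs_def
  have hs : 0 < s := by positivity
  set c : ℝ := ε^2 / (4 * σ^2) with hc_def
  have hc : 0 < c := by positivity
  have hcs : 1/c = 4 * s := by
    rw [hc_def, hs_def]; field_simp
  set x : ℝ := Real.exp (-c) with hx_def
  have hx0 : 0 < x := Real.exp_pos _
  have hx1 : x < 1 := by
    rw [hx_def, Real.exp_lt_one_iff]; linarith
  -- has sum facts over ℕ
  have hgeo : HasSum (fun n : ℕ => x ^ (n+1)) (x * (1-x)⁻¹) := by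
    have := (hasSum_geometric_of_lt_one hx0.le hx1).mul_left x
    simpa [pow_succ, mul_comm] using this
  have hlog : HasSum (fun n : ℕ => x^(n+1)/(n+1)/c) (-Real.log (1-x)/c) :=
    (Real.hasSum_pow_div_log_of_abs_lt_one (by rw [abs_of_pos hx0]; exact hx1)).div_const c
  have hg : HasSum (fun n : ℕ => x^(n+1) + x^(n+1)/((n:ℝ)+1)/c)
      (x * (1-x)⁻¹ + -Real.log (1-x)/c) := hgeo.add hlog
  -- transfer to ℕ+
  have hgP : HasSum (fun q : ℕ+ => x^(q:ℕ) + x^(q:ℕ)/((q:ℕ):ℝ)/c)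
      (x * (1-x)⁻¹ + -Real.log (1-x)/c) := by
    rw [← Equiv.pnatEquivNat.symm.hasSum_iff]
    convert hg using 2 with n
    simp [Equiv.pnatEquivNat, Nat.succPNat]
  -- termwise bound
  have hfle : ∀ q : ℕ+, 1 / (Real.exp ((q + 1/2) * ε^2 / (4 * σ^2)) - 1)
      ≤ x^(q:ℕ) + x^(q:ℕ)/((q:ℕ):ℝ)/c := by
    intro q
    have hq1 : 1 ≤ (q:ℕ) := q.one_le
    have hrw : ((q:ℝ) + 1/2) * ε^2 / (4 * σ^2) = (((q:ℕ):ℝ) + 1/2) * c := by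
      rw [hc_def]; push_cast; ring
    rw [hrw]
    exact aux_term_le hc (q:ℕ) hq1
  have hf_nonneg : ∀ q : ℕ+, 0 ≤ 1 / (Real.exp ((q + 1/2) * ε^2 / (4 * σ^2)) - 1) := by
    intro q
    have hq1 : (1:ℝ) ≤ ((q:ℕ):ℝ) := by exact_mod_cast q.one_le
    have hz0 : 0 < ((q:ℝ) + 1/2) * ε^2 / (4 * σ^2) := by
      have : (0:ℝ) < (q:ℝ) + 1/2 := by push_cast; linarith
      positivity
    have hgt : 1 < Real.exp (((q:ℝ) + 1/2) * ε^2 / (4 * σ^2)) := by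
      nlinarith [Real.add_one_le_exp (((q:ℝ) + 1/2) * ε^2 / (4 * σ^2))]
    exact div_nonneg zero_le_one (by linarith)
  have hf_sum : Summable (fun q : ℕ+ => 1 / (Real.exp ((q + 1/2) * ε^2 / (4 * σ^2)) - 1)) :=
    Summable.of_nonneg_of_le hf_nonneg hfle hgP.summable
  have h1 : (∑' q : ℕ+, 1 / (Real.exp ((q + 1/2) * ε^2 / (4 * σ^2)) - 1))
      ≤ x * (1-x)⁻¹ + -Real.log (1-x)/c := by
    rw [← hgP.tsum_eq]
    exact Summable.tsum_le_tsum hfle hf_sum hgP.summable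
  -- bound the sum value
  have hxec : x * Real.exp c = 1 := by rw [hx_def, ← Real.exp_add]; simp
  have hxc : x * (1 + c) ≤ 1 := by
    nlinarith [Real.add_one_le_exp c, hx0.le]
  have hA : x * (1-x)⁻¹ ≤ 1/c := by
    rw [← div_eq_mul_inv, div_le_div_iff₀ (by linarith) hc]
    nlinarith
  have h1x : c / (1 + c) ≤ 1 - x := by
    rw [div_le_iff₀ (by linarith : (0:ℝ) < 1 + c)]
    nlinarith
  have hB : -Real.log (1-x) ≤ Real.log (1 + 1/c) := by
    rw [← Real.log_inv]
    have hinv : (1-x)⁻¹ ≤ 1 + 1/c := by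
      have h2 : (1-x)⁻¹ ≤ (c/(1+c))⁻¹ := by
        apply inv_anti₀ (by positivity) h1x
      have h3 : (c/(1+c))⁻¹ = 1 + 1/c := by field_simp; ring
      rw [h3] at h2; linarith
    exact Real.log_le_log (inv_pos.mpr (by linarith)) hinv
  have hBc : -Real.log (1-x)/c ≤ Real.log (1 + 1/c) / c :=
    (div_le_div_iff_of_pos_right hc).mpr hB
  have h14 : (1:ℝ) + 4*s ≤ (1+s)^4 := by
    have hexp : (1+s)^4 = 1 + 4*s + 6*s^2 + 4*s^3 + s^4 := by ring
    nlinarith [pow_nonneg hs.le 2, pow_nonneg hs.le 3, pow_nonneg hs.le 4]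
  have hlog4 : Real.log (1+4*s) ≤ 4 * Real.log (1+s) := by
    calc Real.log (1+4*s) ≤ Real.log ((1+s)^4) := Real.log_le_log (by positivity) h14
      _ = 4 * Real.log (1+s) := by rw [Real.log_pow]; norm_num
  have hL : 0 ≤ Real.log (1+s) := Real.log_nonneg (by linarith)
  have hL4 : 0 ≤ Real.log (1+4*s) := Real.log_nonneg (by linarith)
  have hkey : 1/c + Real.log (1 + 1/c) / c ≤ 16 * s * (1 + Real.log (1+s)) := by
    have e2 : Real.log (1 + 1/c) / c = Real.log (1 + 4*s) * (4 * s) := by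
      rw [hcs, div_eq_mul_one_div, hcs]
    rw [e2, hcs]
    nlinarith [mul_le_mul_of_nonneg_left hlog4 (by positivity : (0:ℝ) ≤ 4*s)]
  linarith
end

section
/- For any ε > 0, σ > 0, and for each k ≥ 1 let X̄_k be a random variable satisfying P(X̄_k ≥ δ) ≤ exp(-kδ²/(2σ²)) for all δ > 0. Then E[∑_{k=1}^∞ 1{X̄_k > ε} · exp(k(X̄_k - ε)²/(2σ²))] ≤ ∑_{q=1}^∞ 1/(exp((q+1/2)ε²/(4σ²)) - 1). -/
open MeasureTheory Real

private lemma aux_tsum_pnat_pow (R : ENNReal) : ∑' k : ℕ+, R ^ (k : ℕ) = R * (1 - R)⁻¹ := by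
  rw [← Equiv.pnatEquivNat.symm.tsum_eq (fun k : ℕ+ => R ^ (k : ℕ))]
  have h : ∀ n : ℕ, ((Equiv.pnatEquivNat.symm n : ℕ+) : ℕ) = n + 1 := fun n => rfl
  simp_rw [h, pow_succ]
  rw [ENNReal.tsum_mul_right, ENNReal.tsum_geometric, mul_comm]

private lemma aux_ofReal_geom (x : ℝ) (hx : 0 < x) :
    ENNReal.ofReal (Real.exp (-x)) * (1 - ENNReal.ofReal (Real.exp (-x)))⁻¹
      = ENNReal.ofReal (1 / (Real.exp x - 1)) := by
  have hr1 : Real.exp (-x) < 1 := Real.exp_lt_one_iff.mpr (by linarith)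
  have hr0 : 0 < Real.exp (-x) := Real.exp_pos _
  have h1 : (1 : ENNReal) - ENNReal.ofReal (Real.exp (-x))
      = ENNReal.ofReal (1 - Real.exp (-x)) := by
    rw [ENNReal.ofReal_sub _ (le_of_lt hr0), ENNReal.ofReal_one]
  rw [h1, ← ENNReal.ofReal_inv_of_pos (by linarith), ← ENNReal.ofReal_mul (le_of_lt hr0)]
  congr 1
  have hex : (0:ℝ) < Real.exp x - 1 := by
    have h := Real.exp_lt_exp.mpr hx
    rw [Real.exp_zero] at h
    linarith
  have hne : Real.exp x ≠ 0 := ne_of_gt (Real.exp_pos x)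
  rw [Real.exp_neg]
  have h2 : Real.exp x - 1 ≠ 0 := ne_of_gt hex
  field_simp

theorem stmt_5 {Ω : Type*} [MeasurableSpace Ω] (P : Measure Ω) [IsProbabilityMeasure P]
    (X : ℕ+ → Ω → ℝ) (σ ε : ℝ) (hσ : 0 < σ) (hε : 0 < ε)
    (hmeas : ∀ k, Measurable (X k))
    (htail : ∀ k : ℕ+, ∀ δ : ℝ, 0 < δ →
      P {ω | X k ω ≥ δ} ≤ ENNReal.ofReal (Real.exp (-(k : ℝ) * δ^2 / (2 * σ^2)))) :
    ∫ ω, (∑' k : ℕ+,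
        (if X k ω > ε then Real.exp ((k : ℝ) * (X k ω - ε)^2 / (2 * σ^2)) else 0)) ∂P
      ≤ ∑' q : ℕ+, 1 / (Real.exp (((q : ℝ) + 1/2) * ε^2 / (4 * σ^2)) - 1) := by
  have hσ2 : (0:ℝ) < 2 * σ^2 := by positivity
  set c : ℝ := ε^2 / (4 * σ^2) with hc
  have hc0 : 0 < c := by positivity
  set g : ℕ+ → Ω → ℝ := fun k ω =>
    if X k ω > ε then Real.exp ((k : ℝ) * (X k ω - ε)^2 / (2 * σ^2)) else 0 with hgdef
  have hg0 : ∀ k ω, 0 ≤ g k ω := by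
    intro k ω; simp only [hgdef]
    split <;> [exact le_of_lt (Real.exp_pos _); exact le_refl 0]
  have hgmeas : ∀ k, Measurable (g k) := by
    intro k
    apply Measurable.ite (measurableSet_lt measurable_const (hmeas k))
    · exact Real.measurable_exp.comp
        ((measurable_const.mul (((hmeas k).sub measurable_const).pow_const 2)).div_const _)
    · exact measurable_const
  -- the term on the RHS
  set x : ℕ+ → ℝ := fun q => ((q : ℝ) + 1/2) * c with hxdef
  have hx0 : ∀ q, 0 < x q := by
    intro q
    have : (0:ℝ) < (q:ℝ) + 1/2 := by positivity
    exact mul_pos this hc0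
  have hxarg : ∀ q : ℕ+, ((q : ℝ) + 1/2) * ε^2 / (4 * σ^2) = x q := by
    intro q; simp only [hxdef, hc]; ring
  -- summability of the RHS
  have hterm_pos : ∀ q : ℕ+, (0:ℝ) < Real.exp (x q) - 1 := by
    intro q
    have := Real.exp_lt_exp.mpr (hx0 q)
    simpa using this
  have hsumRHS : Summable (fun q : ℕ+ => 1 / (Real.exp (x q) - 1)) := by
    have hr1 : Real.exp (-c) < 1 := Real.exp_lt_one_iff.mpr (by linarith)
    have hr0 : (0:ℝ) < Real.exp (-c) := Real.exp_pos _
    have hmaj : Summable (fun q : ℕ+ => Real.exp (-c) ^ (q:ℕ) * (1 / (1 - Real.exp (-c)))) := by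
      have h1 : Summable (fun n : ℕ => Real.exp (-c) ^ n * (1 / (1 - Real.exp (-c)))) :=
        (summable_geometric_of_lt_one (le_of_lt hr0) hr1).mul_right _
      exact h1.comp_injective (fun a b h => PNat.coe_injective h)
    apply Summable.of_nonneg_of_le
      (fun q => le_of_lt (div_pos one_pos (hterm_pos q))) _ hmaj
    intro q
    have hq1 : (1:ℝ) ≤ (q:ℝ) := by exact_mod_cast q.one_le
    have hxc : c ≤ x q := by
      show c ≤ ((q:ℝ) + 1/2) * c
      nlinarith
    have hexc : (0:ℝ) < 1 - Real.exp (-c) := by linarith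
    have h1 : 1 - Real.exp (-c) ≤ 1 - Real.exp (-(x q)) := by
      have := Real.exp_le_exp.mpr (neg_le_neg hxc)
      linarith
    have h2 : 1 / (Real.exp (x q) - 1) ≤ Real.exp (-(x q)) / (1 - Real.exp (-c)) := by
      rw [div_le_div_iff₀ (hterm_pos q) hexc]
      have hid : Real.exp (-(x q)) * (Real.exp (x q) - 1) = 1 - Real.exp (-(x q)) := by
        rw [Real.exp_neg]
        field_simp
      nlinarith [hterm_pos q, Real.exp_pos (-(x q))]
    have h3 : Real.exp (-(x q)) ≤ Real.exp (-c) ^ (q:ℕ) := by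
      rw [← Real.exp_nat_mul]
      apply Real.exp_le_exp.mpr
      have h4 : c * (q:ℝ) ≤ x q := by
        show c * (q:ℝ) ≤ ((q:ℝ) + 1/2) * c
        nlinarith
      push_cast
      linarith
    calc 1 / (Real.exp (x q) - 1) ≤ Real.exp (-(x q)) / (1 - Real.exp (-c)) := h2
      _ ≤ Real.exp (-c) ^ (q:ℕ) / (1 - Real.exp (-c)) := by
          gcongr
      _ = Real.exp (-c) ^ (q:ℕ) * (1 / (1 - Real.exp (-c))) := by ring
  -- slices
  set S : ℕ+ → ℕ+ → Set Ω := fun k q =>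
    {ω | ε + ((q:ℝ) - 1) * ε / 2 < X k ω ∧ X k ω ≤ ε + (q:ℝ) * ε / 2} with hSdef
  have hSmeas : ∀ k q, MeasurableSet (S k q) := fun k q =>
    (measurableSet_lt measurable_const (hmeas k)).inter
      (measurableSet_le (hmeas k) measurable_const)
  set B : ℕ+ → ℕ+ → ENNReal := fun k q =>
    ENNReal.ofReal (Real.exp ((k:ℝ) * ((q:ℝ) * ε / 2)^2 / (2 * σ^2))) with hBdef
  -- pointwise peeling bound
  have hpt : ∀ (k : ℕ+) (ω : Ω), ENNReal.ofReal (g k ω)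
      ≤ ∑' q : ℕ+, (S k q).indicator (fun _ => B k q) ω := by
    intro k ω
    by_cases h : X k ω > ε
    · have hXε : 0 < X k ω - ε := sub_pos.mpr h
      set t : ℝ := 2 * (X k ω - ε) / ε with htdef
      have ht : 0 < t := div_pos (by linarith) hε
      set n : ℕ := ⌈t⌉₊ with hndef
      have hn : 0 < n := Nat.ceil_pos.mpr ht
      set q : ℕ+ := ⟨n, hn⟩ with hqdef
      have hqn : ((q:ℕ):ℝ) = (n:ℝ) := rfl
      have hub : t ≤ (n:ℝ) := Nat.le_ceil t
      have hlb : (n:ℝ) - 1 < t := by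
        have h2 := Nat.ceil_lt_add_one (le_of_lt ht)
        push_cast at h2 ⊢
        linarith
      rw [lt_div_iff₀ hε] at hlb
      rw [div_le_iff₀ hε] at hub
      have hmem : ω ∈ S k q := by
        constructor
        · show ε + ((q:ℝ) - 1) * ε / 2 < X k ω
          rw [hqn]; linarith
        · show X k ω ≤ ε + (q:ℝ) * ε / 2
          rw [hqn]; linarith
      have hgle : ENNReal.ofReal (g k ω) ≤ B k q := by
        simp only [hgdef, if_pos h, hBdef]
        apply ENNReal.ofReal_le_ofReal
        apply Real.exp_le_exp.mpr
        have harg : (X k ω - ε)^2 ≤ ((q:ℝ) * ε / 2)^2 := by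
          apply pow_le_pow_left₀ (le_of_lt hXε)
          rw [hqn]; linarith
        have hk0 : (0:ℝ) ≤ (k:ℝ) := by
          have := k.pos
          exact_mod_cast Nat.zero_le (k:ℕ)
        have h5 : (k:ℝ) * (X k ω - ε)^2 ≤ (k:ℝ) * ((q:ℝ) * ε / 2)^2 :=
          mul_le_mul_of_nonneg_left harg hk0
        gcongr
      calc ENNReal.ofReal (g k ω) ≤ B k q := hgle
        _ = (S k q).indicator (fun _ => B k q) ω := by rw [Set.indicator_of_mem hmem]
        _ ≤ ∑' q : ℕ+, (S k q).indicator (fun _ => B k q) ω := ENNReal.le_tsum q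
    · simp only [hgdef, if_neg h, ENNReal.ofReal_zero]
      exact zero_le
  -- per-k bound
  have hk : ∀ k : ℕ+, ∫⁻ ω, ENNReal.ofReal (g k ω) ∂P
      ≤ ∑' q : ℕ+, (ENNReal.ofReal (Real.exp (-(x q))))^(k:ℕ) := by
    intro k
    calc ∫⁻ ω, ENNReal.ofReal (g k ω) ∂P
        ≤ ∫⁻ ω, ∑' q : ℕ+, (S k q).indicator (fun _ => B k q) ω ∂P :=
          lintegral_mono (hpt k)
      _ = ∑' q : ℕ+, ∫⁻ ω, (S k q).indicator (fun _ => B k q) ω ∂P :=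
          lintegral_tsum (fun q => (measurable_const.indicator (hSmeas k q)).aemeasurable)
      _ = ∑' q : ℕ+, B k q * P (S k q) :=
          tsum_congr (fun q => lintegral_indicator_const (hSmeas k q) _)
      _ ≤ ∑' q : ℕ+, B k q *
            ENNReal.ofReal (Real.exp (-(k:ℝ) * (((q:ℝ) + 1) * ε / 2)^2 / (2 * σ^2))) := by
          apply ENNReal.tsum_le_tsum
          intro q
          apply mul_le_mul_right
          have hδpos : (0:ℝ) < ((q:ℝ) + 1) * ε / 2 := by
            have hq0 : (0:ℝ) < (q:ℝ) := by exact_mod_cast q.pos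
            positivity
          refine le_trans (measure_mono ?_) (htail k _ hδpos)
          intro ω hω
          obtain ⟨h1, h2⟩ := hω
          show X k ω ≥ ((q:ℝ) + 1) * ε / 2
          have heq : ε + ((q:ℝ) - 1) * ε / 2 = ((q:ℝ) + 1) * ε / 2 := by ring
          linarith [heq ▸ h1]
      _ = ∑' q : ℕ+, (ENNReal.ofReal (Real.exp (-(x q))))^(k:ℕ) := by
          apply tsum_congr
          intro q
          rw [hBdef, ← ENNReal.ofReal_mul (le_of_lt (Real.exp_pos _)), ← Real.exp_add,
            ← ENNReal.ofReal_pow (Real.exp_nonneg _), ← Real.exp_nat_mul]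
          congr 1
          congr 1
          show (k:ℝ) * ((q:ℝ) * ε / 2)^2 / (2 * σ^2)
              + -(k:ℝ) * (((q:ℝ) + 1) * ε / 2)^2 / (2 * σ^2) = ((k:ℕ):ℝ) * -(((q:ℝ) + 1/2) * c)
          rw [hc]
          have hσne : σ ≠ 0 := ne_of_gt hσ
          have : ((k:ℕ):ℝ) = (k:ℝ) := rfl
          rw [this]
          field_simp
          ring
  -- main ENNReal bound
  have hmain : ∫⁻ ω, ENNReal.ofReal (∑' k : ℕ+, g k ω) ∂P
      ≤ ENNReal.ofReal (∑' q : ℕ+, 1 / (Real.exp (x q) - 1)) := by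
    calc ∫⁻ ω, ENNReal.ofReal (∑' k : ℕ+, g k ω) ∂P
        ≤ ∫⁻ ω, ∑' k : ℕ+, ENNReal.ofReal (g k ω) ∂P := by
          apply lintegral_mono
          intro ω
          dsimp only
          by_cases hs : Summable (fun k => g k ω)
          · rw [ENNReal.ofReal_tsum_of_nonneg (fun k => hg0 k ω) hs]
          · rw [tsum_eq_zero_of_not_summable hs]
            simp
      _ = ∑' k : ℕ+, ∫⁻ ω, ENNReal.ofReal (g k ω) ∂P :=
          lintegral_tsum (fun k => ((hgmeas k).ennreal_ofReal).aemeasurable)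
      _ ≤ ∑' k : ℕ+, ∑' q : ℕ+, (ENNReal.ofReal (Real.exp (-(x q))))^(k:ℕ) :=
          ENNReal.tsum_le_tsum hk
      _ = ∑' q : ℕ+, ∑' k : ℕ+, (ENNReal.ofReal (Real.exp (-(x q))))^(k:ℕ) :=
          ENNReal.tsum_comm
      _ = ∑' q : ℕ+, ENNReal.ofReal (1 / (Real.exp (x q) - 1)) := by
          apply tsum_congr
          intro q
          rw [aux_tsum_pnat_pow, aux_ofReal_geom (x q) (hx0 q)]
      _ = ENNReal.ofReal (∑' q : ℕ+, 1 / (Real.exp (x q) - 1)) :=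
          (ENNReal.ofReal_tsum_of_nonneg
            (fun q => le_of_lt (div_pos one_pos (hterm_pos q))) hsumRHS).symm
  -- conclude
  have hRHS0 : 0 ≤ ∑' q : ℕ+, 1 / (Real.exp (x q) - 1) :=
    tsum_nonneg (fun q => le_of_lt (div_pos one_pos (hterm_pos q)))
  simp only [hxarg]
  by_cases hint : Integrable (fun ω => ∑' k : ℕ+, g k ω) P
  · rw [integral_eq_lintegral_of_nonneg_ae
      (Filter.Eventually.of_forall (fun ω => tsum_nonneg (fun k => hg0 k ω)))
      hint.aestronglyMeasurable]
    exact ENNReal.toReal_le_of_le_ofReal hRHS0 hmain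
  · rw [integral_undef hint]
    exact hRHS0
end

section
/- For any Q > 0 and R > 0, ∑_{q=1}^∞ ∑_{k > Q/q, k ≥ 1} (Q/(k q²)) · exp(-R(q + 1/2)k) ≤ 3Q + 2/R. -/
open Real

lemma pnat_geom {r : ℝ} (h0 : 0 ≤ r) (h1 : r < 1) :
    HasSum (fun k : ℕ+ => r ^ (k : ℕ)) (r / (1 - r)) := by
  have h : HasSum (fun n : ℕ => r ^ (n + 1)) (r * (1 - r)⁻¹) := by
    simpa [pow_succ, mul_comm] using (hasSum_geometric_of_lt_one h0 h1).mul_left r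
  have h2 : HasSum ((fun k : ℕ+ => r ^ (k : ℕ)) ∘ Equiv.pnatEquivNat.symm)
      (r / (1 - r)) := by
    simpa [Function.comp_def, div_eq_mul_inv, Nat.succPNat_coe] using h
  exact Equiv.pnatEquivNat.symm.hasSum_iff.mp h2

theorem stmt_11 (Q R : ℝ) (hQ : 0 < Q) (hR : 0 < R) :
    (∑' q : ℕ+, ∑' k : ℕ+,
      if Q / (q : ℝ) < (k : ℝ) then
        (Q / ((k : ℝ) * (q : ℝ)^2)) * Real.exp (-R * ((q : ℝ) + 1/2) * k) else 0)
    ≤ 3 * Q + 2 / R := by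
  set f : ℕ+ → ℕ+ → ℝ := fun q k =>
    if Q / (q : ℝ) < (k : ℝ) then
      (Q / ((k : ℝ) * (q : ℝ)^2)) * Real.exp (-R * ((q : ℝ) + 1/2) * k) else 0 with hf
  -- per q geometric bound
  have key : ∀ q : ℕ+, ∀ k : ℕ+,
      f q k ≤ (1 / (q : ℝ)) * Real.exp (-R * q) ^ (k : ℕ) := by
    intro q k
    have hq0 : (0:ℝ) < q := by exact_mod_cast q.pos
    have hk0 : (0:ℝ) < k := by exact_mod_cast k.pos
    have hpow : Real.exp (-R * q) ^ (k : ℕ) = Real.exp (-R * q * k) := by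
      rw [← Real.exp_nat_mul]; ring_nf
    simp only [hf]
    split_ifs with h
    · have h1 : Q / ((k : ℝ) * (q : ℝ)^2) ≤ 1 / q := by
        rw [div_le_div_iff₀ (by positivity) hq0]
        have : Q < (k : ℝ) * q := (div_lt_iff₀ hq0).mp h
        nlinarith
      have h2 : Real.exp (-R * ((q : ℝ) + 1/2) * k) ≤ Real.exp (-R * q * k) := by
        apply Real.exp_le_exp.mpr; nlinarith
      rw [hpow]
      have := Real.exp_pos (-R * ((q : ℝ) + 1/2) * k)
      calc Q / ((k : ℝ) * (q : ℝ)^2) * Real.exp (-R * ((q : ℝ) + 1/2) * k)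
          ≤ (1 / q) * Real.exp (-R * ((q : ℝ) + 1/2) * k) := by
            apply mul_le_mul_of_nonneg_right h1 this.le
        _ ≤ (1 / q) * Real.exp (-R * q * k) := by
            apply mul_le_mul_of_nonneg_left h2 (by positivity)
    · rw [hpow]; positivity
  have fnonneg : ∀ q k, 0 ≤ f q k := by
    intro q k; simp only [hf]; split_ifs with h
    · have hq0 : (0:ℝ) < q := by exact_mod_cast q.pos
      have hk0 : (0:ℝ) < k := by exact_mod_cast k.pos
      positivity
    · exact le_rfl
  have hgeom : ∀ q : ℕ+, HasSum (fun k : ℕ+ => (1 / (q : ℝ)) * Real.exp (-R * q) ^ (k : ℕ))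
      ((1 / (q : ℝ)) * (Real.exp (-R * q) / (1 - Real.exp (-R * q)))) := by
    intro q
    have hq0 : (0:ℝ) < q := by exact_mod_cast q.pos
    have hr1 : Real.exp (-R * q) < 1 := by
      rw [Real.exp_lt_one_iff]; nlinarith
    exact (pnat_geom (Real.exp_pos _).le hr1).mul_left _
  have hgval : ∀ q : ℕ+,
      (1 / (q : ℝ)) * (Real.exp (-R * q) / (1 - Real.exp (-R * q))) ≤ 1 / (R * (q : ℝ)^2) := by
    intro q
    have hq0 : (0:ℝ) < q := by exact_mod_cast q.pos
    have hr1 : Real.exp (-R * q) < 1 := by rw [Real.exp_lt_one_iff]; nlinarith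
    set r := Real.exp (-R * q) with hrdef
    have hrpos : 0 < r := Real.exp_pos _
    have hexp : R * q + 1 ≤ Real.exp (R * q) := Real.add_one_le_exp _
    have hrinv : r = (Real.exp (R * q))⁻¹ := by
      rw [hrdef, ← Real.exp_neg]; ring_nf
    have hkey : r / (1 - r) ≤ 1 / (R * q) := by
      rw [div_le_div_iff₀ (by linarith) (by positivity)]
      have hE : 0 < Real.exp (R * q) := Real.exp_pos _
      rw [hrinv]
      rw [inv_mul_le_iff₀ hE] at *
      · nlinarith [mul_pos hR hq0, inv_pos.mpr hE, mul_inv_cancel₀ hE.ne']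
    calc (1 / (q : ℝ)) * (r / (1 - r)) ≤ (1 / (q : ℝ)) * (1 / (R * q)) := by
          apply mul_le_mul_of_nonneg_left hkey (by positivity)
      _ = 1 / (R * (q : ℝ)^2) := by field_simp
  have hfsummable : ∀ q : ℕ+, Summable (f q) := fun q =>
    Summable.of_nonneg_of_le (fnonneg q) (key q) (hgeom q).summable
  have hinner : ∀ q : ℕ+, (∑' k : ℕ+, f q k) ≤ 1 / (R * (q : ℝ)^2) := by
    intro q
    calc (∑' k : ℕ+, f q k)
        ≤ ∑' k : ℕ+, (1 / (q : ℝ)) * Real.exp (-R * q) ^ (k : ℕ) :=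
          Summable.tsum_le_tsum (key q) (hfsummable q) (hgeom q).summable
      _ = (1 / (q : ℝ)) * (Real.exp (-R * q) / (1 - Real.exp (-R * q))) := (hgeom q).tsum_eq
      _ ≤ 1 / (R * (q : ℝ)^2) := hgval q
  -- sum over q of 1/q^2
  have hbasel : HasSum (fun q : ℕ+ => (1 : ℝ) / (q : ℝ) ^ 2) (π ^ 2 / 6) := by
    have h := hasSum_zeta_two
    refine (Function.Injective.hasSum_iff (f := fun n : ℕ => (1:ℝ)/(n:ℝ)^2)
      (g := fun q : ℕ+ => (q : ℕ)) (fun a b hab => by exact_mod_cast PNat.coe_injective hab)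
      ?_).mpr h
    intro x hx
    have : x = 0 := by
      by_contra h0
      exact hx ⟨⟨x, Nat.pos_of_ne_zero h0⟩, rfl⟩
    simp [this]
  have hmaj : HasSum (fun q : ℕ+ => 1 / (R * (q : ℝ)^2)) ((1/R) * (π ^ 2 / 6)) := by
    have := hbasel.mul_left (1/R)
    convert this using 2 with q
    · rfl
    · ring
  have houter : Summable (fun q : ℕ+ => ∑' k : ℕ+, f q k) :=
    Summable.of_nonneg_of_le (fun q => tsum_nonneg (fnonneg q)) hinner hmaj.summable
  calc (∑' q : ℕ+, ∑' k : ℕ+, f q k)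
      ≤ ∑' q : ℕ+, 1 / (R * (q : ℝ)^2) := Summable.tsum_le_tsum hinner houter hmaj.summable
    _ = (1/R) * (π ^ 2 / 6) := hmaj.tsum_eq
    _ ≤ 3 * Q + 2 / R := by
        have hpi : π < 3.15 := pi_lt_d2
        have hpi0 : 0 < π := pi_pos
        have h2 : (1/R) * (π ^ 2 / 6) ≤ 2 / R := by
          rw [div_eq_mul_inv 2 R, one_div, mul_comm R⁻¹]
          apply mul_le_mul_of_nonneg_right _ (by positivity)
          nlinarith
        nlinarith
end
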